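/- arXiv:1908.10957 — 2 statements merged into one kernel-verified Lean document; each statement's English description precedes it below -/
import Mathlib

section
/- Let (X,ρ) be a compact metric space and let {τ_n}_{n≥1} be a sequence of Borel measurable maps τ_n : X → X converging uniformly to a Borel measurable map τ : X → X. Set τ_{(0,n)} = τ_n ∘ τ_{n-1} ∘ ⋯ ∘ τ_1 (with τ_0 the identity). Let η be a Borel probability measure on X and let μ_n = (1/n) Σ_{i=1}^n (τ_{(0,i)})_* η. Then for every continuous function g : X → ℝ, the difference ∫ g dμ_n − ∫ (g ∘ τ) dμ_n converges to 0 as n → ∞. -/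
open MeasureTheory Filter Topology
open scoped ENNReal

/-!
With `a i = ∫ g ∘ τ_{(0,i)} dη` and `b i = ∫ g ∘ τ ∘ τ_{(0,i)} dη`, the difference is the Cesàro
mean of `a i - b i = (a i - a (i+1)) + (a (i+1) - b i)`. The first part telescopes to
`(a 1 - a (n+1)) / n → 0`; the second tends to `0` because `g ∘ τ_{i+1} → g ∘ τ` uniformly,
`g` being uniformly continuous on the compact space `X`.
-/

/-- `iterComp τ n = τ_n ∘ τ_{n-1} ∘ ⋯ ∘ τ_1` (with `iterComp τ 0 = id`). -/
def iterComp {X : Type*} (τ : ℕ → X → X) : ℕ → X → X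
  | 0 => id
  | n + 1 => τ (n + 1) ∘ iterComp τ n

theorem measurable_iterComp {X : Type*} [MeasurableSpace X] {τ : ℕ → X → X}
    (hτ : ∀ n, 1 ≤ n → Measurable (τ n)) : ∀ n, Measurable (iterComp τ n)
  | 0 => measurable_id
  | n + 1 => (hτ (n + 1) (Nat.le_add_left 1 n)).comp (measurable_iterComp hτ n)

theorem Finset.sum_Icc_one_eq_sum_range {M : Type*} [AddCommMonoid M] (f : ℕ → M) (n : ℕ) :
    ∑ i ∈ Finset.Icc 1 n, f i = ∑ i ∈ Finset.range n, f (i + 1) := by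
  rw [← Finset.Ico_add_one_right_eq_Icc, Finset.sum_Ico_eq_sum_range]
  simp only [Nat.add_sub_cancel, add_comm 1]

section Cesaro

variable {E : Type*} [NormedAddCommGroup E] [NormedSpace ℝ E]

theorem tendsto_smul_sum_range_sub {a b : ℕ → E} {C : ℝ} (ha : ∀ i, ‖a i‖ ≤ C)
    (hab : Tendsto (fun i => a (i + 1) - b i) atTop (𝓝 0)) :
    Tendsto (fun n : ℕ => (n : ℝ)⁻¹ • ∑ i ∈ Finset.range n, (a i - b i)) atTop (𝓝 0) := by
  have hsplit : ∀ n, ∑ i ∈ Finset.range n, (a i - b i)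
      = (a 0 - a n) + ∑ i ∈ Finset.range n, (a (i + 1) - b i) := by
    intro n
    rw [← neg_sub, ← Finset.sum_range_sub, ← Finset.sum_neg_distrib, ← Finset.sum_add_distrib]
    exact Finset.sum_congr rfl fun i _ => by abel
  have hboundary : Tendsto (fun n : ℕ => (n : ℝ)⁻¹ • (a 0 - a n)) atTop (𝓝 0) := by
    refine squeeze_zero_norm (fun n => ?_)
      (by simpa using tendsto_inv_atTop_nhds_zero_nat.mul_const (2 * C))
    rw [norm_smul, norm_inv, Real.norm_natCast]
    gcongr
    exact (norm_sub_le _ _).trans (by linarith [ha 0, ha n])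
  simpa only [hsplit, smul_add, add_zero, zero_mul] using hboundary.add hab.cesaro_smul

end Cesaro

section Integral

variable {X Y E : Type*} [MeasurableSpace X] [NormedAddCommGroup E] [NormedSpace ℝ E]

theorem integral_smul_sum_map [MeasurableSpace Y] {ι : Type*} (s : Finset ι) (c : ℝ≥0∞)
    {η : Measure X} {φ : ι → X → Y} (hφ : ∀ i, AEMeasurable (φ i) η) {f : Y → E}
    (hf : ∀ i ∈ s, Integrable f (η.map (φ i))) :
    ∫ y, f y ∂(c • ∑ i ∈ s, η.map (φ i)) = c.toReal • ∑ i ∈ s, ∫ x, f (φ i x) ∂η := by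
  rw [integral_smul_measure, integral_finsetSum_measure hf]
  exact congrArg _ (Finset.sum_congr rfl fun i hi =>
    integral_map (hφ i) (hf i hi).aestronglyMeasurable)

theorem tendsto_integral_comp_sub_of_tendstoUniformly {ι : Type*} {p : Filter ι}
    {η : Measure X} [IsFiniteMeasure η] {F : ι → Y → E} {f : Y → E}
    (hF : TendstoUniformly F f p) (ψ : ι → X → Y)
    (hFi : ∀ i, Integrable (fun x => F i (ψ i x)) η)
    (hf : ∀ i, Integrable (fun x => f (ψ i x)) η) :
    Tendsto (fun i => ∫ x, F i (ψ i x) ∂η - ∫ x, f (ψ i x) ∂η) p (𝓝 0) := by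
  rw [Metric.tendsto_nhds]
  intro ε hε
  have hδ : 0 < ε / (η.real Set.univ + 1) := by positivity
  filter_upwards [Metric.tendstoUniformly_iff.mp hF _ hδ] with i hi
  rw [dist_zero_right, ← integral_sub (hFi i) (hf i)]
  calc ‖∫ x, (F i (ψ i x) - f (ψ i x)) ∂η‖
      ≤ ε / (η.real Set.univ + 1) * η.real Set.univ :=
        norm_integral_le_of_norm_le_const
          (Eventually.of_forall fun x => by rw [← dist_eq_norm, dist_comm]; exact (hi _).le)
    _ < ε := by
        rw [div_mul_eq_mul_div, div_lt_iff₀ (by positivity)]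
        nlinarith

end Integral

/-- For the Cesàro averages `μ_n` of the pushforwards of a probability measure `η`
under a non-autonomous system converging uniformly to a Borel map `τ`, one has
`∫ g dμ_n − ∫ (g ∘ τ) dμ_n → 0` for every continuous `g`. -/
theorem integral_sub_comp_tendsto_zero
    {X : Type*} [MetricSpace X] [CompactSpace X] [MeasurableSpace X] [BorelSpace X]
    (τseq : ℕ → X → X) (hmeas : ∀ n, 1 ≤ n → Measurable (τseq n))
    (τ : X → X) (hτmeas : Measurable τ)
    (hconv : TendstoUniformly τseq τ atTop)
    (η : Measure X) [IsProbabilityMeasure η]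
    (μseq : ℕ → Measure X)
    (hμseq : ∀ n, μseq n
      = (n : ℝ≥0∞)⁻¹ • ∑ i ∈ Finset.Icc 1 n, Measure.map (iterComp τseq i) η) :
    ∀ g : X → ℝ, Continuous g →
      Tendsto (fun n => (∫ x, g x ∂(μseq n)) - ∫ x, g (τ x) ∂(μseq n)) atTop (𝓝 0) := by
  intro g hg
  have hiter := measurable_iterComp hmeas
  obtain ⟨C, hC⟩ : ∃ C, ∀ x, ‖g x‖ ≤ C :=
    ⟨_, (BoundedContinuousFunction.mkOfCompact ⟨g, hg⟩).norm_coe_le_norm⟩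
  have hint : ∀ f : X → ℝ, Measurable f → (∀ x, ‖f x‖ ≤ C) →
      ∀ (ν : Measure X) [IsFiniteMeasure ν], Integrable f ν := fun f hf hfC ν _ =>
    .of_bound hf.aestronglyMeasurable C (.of_forall hfC)
  have hmean : ∀ f : X → ℝ, Measurable f → (∀ x, ‖f x‖ ≤ C) → ∀ n : ℕ, ∫ x, f x ∂μseq n
      = (n : ℝ)⁻¹ • ∑ i ∈ Finset.range n, ∫ x, f (iterComp τseq (i + 1) x) ∂η := by
    intro f hf hfC n
    rw [hμseq, integral_smul_sum_map _ _ (fun i => (hiter i).aemeasurable)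
      (fun i _ => hint f hf hfC _), Finset.sum_Icc_one_eq_sum_range, ENNReal.toReal_inv,
      ENNReal.toReal_natCast]
  have hgτ : Measurable (g ∘ τ) := hg.measurable.comp hτmeas
  have hstep : Tendsto (fun i => ∫ x, g (iterComp τseq (i + 2) x) ∂η
      - ∫ x, g (τ (iterComp τseq (i + 1) x)) ∂η) atTop (𝓝 0) :=
    tendsto_integral_comp_sub_of_tendstoUniformly
      (F := fun i => g ∘ τseq (i + 2)) (f := g ∘ τ)
      (fun u hu => (tendsto_add_atTop_nat 2).eventually
        ((CompactSpace.uniformContinuous_of_continuous hg).comp_tendstoUniformly hconv u hu))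
      (fun i => iterComp τseq (i + 1))
      (fun i => hint _ (hg.measurable.comp (hiter (i + 2))) (fun _ => hC _) η)
      (fun i => hint _ (hgτ.comp (hiter (i + 1))) (fun _ => hC _) η)
  simp_rw [hmean g hg.measurable hC, hmean (fun x => g (τ x)) hgτ (fun _ => hC _), ← smul_sub,
    ← Finset.sum_sub_distrib]
  exact tendsto_smul_sum_range_sub (C := C) (fun i =>
    (norm_integral_le_of_norm_le_const (.of_forall fun _ => hC _)).trans_eq (by simp)) hstep
end

section
/- For n ≥ 2 define τ_n : [0,1] → [0,1] by τ_n(x) = (1 − 1/n)x for x ∈ [0, 1/2) and τ_n(x) = 2x − 1 for x ∈ [1/2, 1], and set τ_{(2,k)} = τ_k ∘ τ_{k-1} ∘ ⋯ ∘ τ_2 for k ≥ 2. Then for every k ≥ 2 the preimage of [0, 1/2] under τ_{(2,k)} is the interval [0, 1 − 2^{-k}], i.e., τ_{(2,k)}^{-1}([0, 1/2]) = [0, Σ_{i=1}^{k} 2^{-i}]. -/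
/-! On `[0, 1/2]` every `τ_n` stays in `[0, 1/2]`: its left branch contracts towards `0`, and
`τ_n(1/2) = 0`. A point `x > 1 - 2^{-k}` is so close to `1` that `τ_2, …, τ_k` all act on its orbit
by the right branch `y ↦ 1 - 2(1 - y)`, whence `τ_{(2,k)}(x) = 1 - 2^{k-1}(1 - x) > 1/2`. A point
`x ≤ 1 - 2^{-k}` follows that branch only until its image first lands in `[0, 1/2]`, where it then
stays. -/

open MeasureTheory Filter Topology

/-- The maps `τ_n(x) = (1 − 1/n)x` on `[0,1/2)` and `τ_n(x) = 2x − 1` on `[1/2,1]`. -/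
noncomputable def tauN (n : ℕ) (x : ℝ) : ℝ :=
  if x < 1 / 2 then (1 - 1 / (n : ℝ)) * x else 2 * x - 1

/-- `comp2 k = τ_k ∘ τ_{k-1} ∘ ⋯ ∘ τ_2` for `k ≥ 2`. -/
noncomputable def comp2 : ℕ → ℝ → ℝ
  | 0 => id
  | 1 => id
  | k + 2 => tauN (k + 2) ∘ comp2 (k + 1)

open Set

lemma tauN_mapsTo_Icc_zero_half (n : ℕ) : MapsTo (tauN n) (Icc 0 (1 / 2)) (Icc 0 (1 / 2)) := by
  rintro y ⟨hy0, hy1⟩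
  unfold tauN
  split_ifs
  · have hc0 := Nat.one_sub_one_div_cast_nonneg (α := ℝ) n
    have hc1 := Nat.one_sub_one_div_cast_le_one (α := ℝ) n
    exact ⟨mul_nonneg hc0 hy0, by nlinarith⟩
  · constructor <;> linarith

lemma tauN_of_half_le {n : ℕ} {y : ℝ} (hy : 1 / 2 ≤ y) : tauN n y = 2 * y - 1 :=
  if_neg hy.not_gt

lemma comp2_add_two_apply (m : ℕ) (x : ℝ) :
    comp2 (m + 2) x = tauN (m + 2) (comp2 (m + 1) x) := rfl

lemma two_pow_mul_half_pow_add (m j : ℕ) : (2 : ℝ) ^ m * (1 / 2) ^ (m + j) = (1 / 2) ^ j := by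
  rw [pow_add, ← mul_assoc, ← mul_pow]
  norm_num

/- Indexed by `m + 1`: the claims already hold for `comp2 1 = id`, where the induction starts. -/
lemma comp2_succ_of_lt {m : ℕ} {x : ℝ} (hx : 1 - (1 / 2) ^ (m + 1) < x) :
    comp2 (m + 1) x = 1 - 2 ^ m * (1 - x) := by
  induction m with
  | zero => simp [comp2]
  | succ m ih =>
    have hx' : 1 - (1 / 2) ^ (m + 1) < x := by
      have : (1 / 2 : ℝ) ^ (m + 2) < (1 / 2) ^ (m + 1) :=
        pow_lt_pow_right_of_lt_one₀ (by norm_num) (by norm_num) (by omega)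
      linarith
    have hquarter : 2 ^ m * (1 - x) < 1 / 4 := by
      have := two_pow_mul_half_pow_add m 2
      have : (0 : ℝ) < 2 ^ m := by positivity
      nlinarith
    rw [comp2_add_two_apply, ih hx', tauN_of_half_le (by linarith), pow_succ]
    ring

lemma comp2_succ_mem_Icc_of_le {m : ℕ} {x : ℝ} (hx0 : 0 ≤ x) (hx : x ≤ 1 - (1 / 2) ^ (m + 1)) :
    comp2 (m + 1) x ∈ Icc 0 (1 / 2) := by
  induction m with
  | zero => simpa [comp2] using ⟨hx0, by linarith⟩
  | succ m ih =>
    rw [comp2_add_two_apply]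
    by_cases hle : x ≤ 1 - (1 / 2) ^ (m + 1)
    · exact tauN_mapsTo_Icc_zero_half _ (ih hle)
    · have hlt : 1 - (1 / 2) ^ (m + 1) < x := not_le.mp hle
      have h1 := two_pow_mul_half_pow_add m 1
      have h2 := two_pow_mul_half_pow_add m 2
      have : (0 : ℝ) < 2 ^ m := by positivity
      rw [comp2_succ_of_lt hlt, tauN_of_half_le (by nlinarith)]
      constructor <;> nlinarith

lemma preimage_comp2_succ_Icc_half (m : ℕ) :
    comp2 (m + 1) ⁻¹' Icc (0 : ℝ) (1 / 2) ∩ Icc 0 1 = Icc 0 (1 - (1 / 2) ^ (m + 1)) := by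
  ext x
  constructor
  · rintro ⟨hfx, hx0, -⟩
    refine ⟨hx0, not_lt.mp fun hlt => ?_⟩
    have := two_pow_mul_half_pow_add m 1
    have : (0 : ℝ) < 2 ^ m := by positivity
    have hle := hfx.2
    rw [comp2_succ_of_lt hlt] at hle
    nlinarith
  · rintro ⟨hx0, hx⟩
    have : (0 : ℝ) ≤ (1 / 2) ^ (m + 1) := by positivity
    exact ⟨comp2_succ_mem_Icc_of_le hx0 hx, hx0, by linarith⟩

lemma sum_Icc_one_half_pow (k : ℕ) :
    ∑ i ∈ Finset.Icc 1 k, (1 / 2 : ℝ) ^ i = 1 - (1 / 2) ^ k := by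
  induction k with
  | zero => simp
  | succ k ih =>
    rw [Finset.sum_Icc_succ_top (by omega), ih]
    ring

/-- For every `k ≥ 2`, the preimage of `[0,1/2]` under `τ_{(2,k)}` (within the domain
`[0,1]`) is the interval `[0, Σ_{i=1}^k 2^{-i}] = [0, 1 − 2^{-k}]`. -/
theorem preimage_comp2_Icc_half (k : ℕ) (hk : 2 ≤ k) :
    (∑ i ∈ Finset.Icc 1 k, (1 / 2 : ℝ) ^ i) = 1 - (1 / 2 : ℝ) ^ k ∧
    comp2 k ⁻¹' Set.Icc (0 : ℝ) (1 / 2) ∩ Set.Icc 0 1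
      = Set.Icc (0 : ℝ) (∑ i ∈ Finset.Icc 1 k, (1 / 2 : ℝ) ^ i) := by
  obtain ⟨m, rfl⟩ : ∃ m, k = m + 1 := ⟨k - 1, by omega⟩
  rw [sum_Icc_one_half_pow]
  exact ⟨rfl, preimage_comp2_succ_Icc_half m⟩
end
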